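/- Let U ⊆ ℂ be open, let a : U → ℂ be differentiable and b : U → ℂ, and let y₁, y₂ : U → ℂ be three times differentiable solutions of y'' + a·y' + b·y = 0 on U such that y₂(t) ≠ 0 and the Wronskian y₁'(t)·y₂(t) − y₁(t)·y₂'(t) ≠ 0 for all t ∈ U. Then z := y₁/y₂ is three times differentiable with z'(t) ≠ 0 on U, and S(z)(t) = 4b(t) − a(t)² − 2a'(t) for all t ∈ U. -/

import Mathlib

/-!
Write `z = y₁ / y₂` and `W = y₁' y₂ - y₁ y₂'`. Then `z' = W / y₂²`, and Abel's identity `W' = -a W`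
gives `z'' = z' p` with `p = -a - 2 y₂'/y₂`. For any such `p` the Schwarzian of `z` is `2 p' - p²`,
and the logarithmic derivative `u = y₂'/y₂` satisfies the Riccati equation `u' = -b - a u - u²`;
substituting, every term involving `u` cancels and `2 p' - p² = 4 b - a² - 2 a'`.
-/

open Filter Topology

/-- The Schwarzian derivative `S(z) = (2 z' z''' - 3 (z'')²)/(z')²`. -/
noncomputable def schwarzian (z : ℂ → ℂ) : ℂ → ℂ := fun t =>
  (2 * deriv z t * deriv (deriv (deriv z)) t - 3 * (deriv (deriv z) t) ^ 2)
    / (deriv z t) ^ 2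

theorem schwarzian_eq_of_deriv_deriv_eq_mul {z p : ℂ → ℂ} {t : ℂ}
    (hz : DifferentiableAt ℂ (deriv z) t) (hp : DifferentiableAt ℂ p t)
    (h : deriv (deriv z) =ᶠ[𝓝 t] fun s => deriv z s * p s) (h0 : deriv z t ≠ 0) :
    schwarzian z t = 2 * deriv p t - p t ^ 2 := by
  have h2 : deriv (deriv z) t = deriv z t * p t := h.eq_of_nhds
  have h3 : deriv (deriv (deriv z)) t = deriv (deriv z) t * p t + deriv z t * deriv p t := by
    rw [h.deriv_eq, deriv_fun_mul hz hp]
  rw [schwarzian, h3, h2]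
  field_simp
  ring

section SecondOrderODE

variable {𝕜 : Type*} [NontriviallyNormedField 𝕜] {a b y y₁ y₂ : 𝕜 → 𝕜} {t : 𝕜}

noncomputable def wronskian (y₁ y₂ : 𝕜 → 𝕜) (t : 𝕜) : 𝕜 :=
  deriv y₁ t * y₂ t - y₁ t * deriv y₂ t

theorem hasDerivAt_div_eq_wronskian (h₁ : DifferentiableAt 𝕜 y₁ t)
    (h₂ : DifferentiableAt 𝕜 y₂ t) (hy₂ : y₂ t ≠ 0) :
    HasDerivAt (fun s => y₁ s / y₂ s) (wronskian y₁ y₂ t / y₂ t ^ 2) t :=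
  h₁.hasDerivAt.div h₂.hasDerivAt hy₂

theorem hasDerivAt_wronskian (h₁ : DifferentiableAt 𝕜 y₁ t)
    (h₁' : DifferentiableAt 𝕜 (deriv y₁) t) (h₂ : DifferentiableAt 𝕜 y₂ t)
    (h₂' : DifferentiableAt 𝕜 (deriv y₂) t)
    (hODE₁ : deriv (deriv y₁) t + a t * deriv y₁ t + b t * y₁ t = 0)
    (hODE₂ : deriv (deriv y₂) t + a t * deriv y₂ t + b t * y₂ t = 0) :
    HasDerivAt (wronskian y₁ y₂) (-a t * wronskian y₁ y₂ t) t := by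
  refine ((h₁'.hasDerivAt.mul h₂.hasDerivAt).sub
    (h₁.hasDerivAt.mul h₂'.hasDerivAt)).congr_deriv ?_
  rw [wronskian]
  linear_combination y₂ t * hODE₁ - y₁ t * hODE₂

theorem hasDerivAt_logDeriv_of_ode (h : DifferentiableAt 𝕜 y t)
    (h' : DifferentiableAt 𝕜 (deriv y) t) (hy : y t ≠ 0)
    (hODE : deriv (deriv y) t + a t * deriv y t + b t * y t = 0) :
    HasDerivAt (logDeriv y) (-b t - a t * logDeriv y t - logDeriv y t ^ 2) t := by
  refine (h'.hasDerivAt.div h.hasDerivAt hy).congr_deriv ?_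
  rw [logDeriv_apply]
  field_simp
  linear_combination y t * hODE

theorem hasDerivAt_deriv_div_of_ode {U : Set 𝕜} (hU : IsOpen U) (ht : t ∈ U)
    (h₁ : ∀ s ∈ U, DifferentiableAt 𝕜 y₁ s) (h₂ : ∀ s ∈ U, DifferentiableAt 𝕜 y₂ s)
    (hy₂ : ∀ s ∈ U, y₂ s ≠ 0)
    (h₁' : DifferentiableAt 𝕜 (deriv y₁) t) (h₂' : DifferentiableAt 𝕜 (deriv y₂) t)
    (hODE₁ : deriv (deriv y₁) t + a t * deriv y₁ t + b t * y₁ t = 0)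
    (hODE₂ : deriv (deriv y₂) t + a t * deriv y₂ t + b t * y₂ t = 0) :
    HasDerivAt (deriv fun s => y₁ s / y₂ s)
      (deriv (fun s => y₁ s / y₂ s) t * (-a t - 2 * logDeriv y₂ t)) t := by
  have hz : ∀ s ∈ U, deriv (fun s => y₁ s / y₂ s) s = wronskian y₁ y₂ s / y₂ s ^ 2 :=
    fun s hs => (hasDerivAt_div_eq_wronskian (h₁ s hs) (h₂ s hs) (hy₂ s hs)).deriv
  have hW := hasDerivAt_wronskian (h₁ t ht) h₁' (h₂ t ht) h₂' hODE₁ hODE₂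
  refine ((hW.div ((h₂ t ht).hasDerivAt.fun_pow 2) (pow_ne_zero 2 (hy₂ t ht)))
    |>.congr_of_eventuallyEq (eventually_of_mem (hU.mem_nhds ht) hz)).congr_deriv ?_
  rw [hz t ht, logDeriv_apply]
  have hy₂t := hy₂ t ht
  field_simp
  ring

end SecondOrderODE

/-- The Schwarzian derivative of the ratio `z = y₁/y₂` of a basis of solutions of
`y'' + a y' + b y = 0` equals `4b - a² - 2a'`. -/
theorem schwarzian_of_solution_ratio (U : Set ℂ) (hU : IsOpen U) (a b y₁ y₂ : ℂ → ℂ)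
    (ha : ∀ t ∈ U, DifferentiableAt ℂ a t)
    (hy₁1 : ∀ t ∈ U, DifferentiableAt ℂ y₁ t)
    (hy₁2 : ∀ t ∈ U, DifferentiableAt ℂ (deriv y₁) t)
    (hy₂1 : ∀ t ∈ U, DifferentiableAt ℂ y₂ t)
    (hy₂2 : ∀ t ∈ U, DifferentiableAt ℂ (deriv y₂) t)
    (hODE₁ : ∀ t ∈ U, deriv (deriv y₁) t + a t * deriv y₁ t + b t * y₁ t = 0)
    (hODE₂ : ∀ t ∈ U, deriv (deriv y₂) t + a t * deriv y₂ t + b t * y₂ t = 0)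
    (hy₂ne : ∀ t ∈ U, y₂ t ≠ 0)
    (hWr : ∀ t ∈ U, deriv y₁ t * y₂ t - y₁ t * deriv y₂ t ≠ 0) :
    (∀ t ∈ U, DifferentiableAt ℂ (fun s => y₁ s / y₂ s) t) ∧
    (∀ t ∈ U, DifferentiableAt ℂ (deriv (fun s => y₁ s / y₂ s)) t) ∧
    (∀ t ∈ U, DifferentiableAt ℂ (deriv (deriv (fun s => y₁ s / y₂ s))) t) ∧
    (∀ t ∈ U, deriv (fun s => y₁ s / y₂ s) t ≠ 0) ∧
    (∀ t ∈ U, schwarzian (fun s => y₁ s / y₂ s) t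
        = 4 * b t - (a t) ^ 2 - 2 * deriv a t) := by
  set z : ℂ → ℂ := fun s => y₁ s / y₂ s
  set p : ℂ → ℂ := fun s => -a s - 2 * logDeriv y₂ s
  have hz : ∀ t ∈ U, HasDerivAt z (wronskian y₁ y₂ t / y₂ t ^ 2) t := fun t ht =>
    hasDerivAt_div_eq_wronskian (hy₁1 t ht) (hy₂1 t ht) (hy₂ne t ht)
  have hz' : ∀ t ∈ U, HasDerivAt (deriv z) (deriv z t * p t) t := fun t ht =>
    hasDerivAt_deriv_div_of_ode hU ht hy₁1 hy₂1 hy₂ne (hy₁2 t ht) (hy₂2 t ht)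
      (hODE₁ t ht) (hODE₂ t ht)
  have hp : ∀ t ∈ U, HasDerivAt p
      (-deriv a t - 2 * (-b t - a t * logDeriv y₂ t - logDeriv y₂ t ^ 2)) t := fun t ht =>
    (ha t ht).hasDerivAt.neg.sub <| (hasDerivAt_logDeriv_of_ode (hy₂1 t ht) (hy₂2 t ht)
      (hy₂ne t ht) (hODE₂ t ht)).const_mul 2
  have hz'' : ∀ t ∈ U, deriv (deriv z) =ᶠ[𝓝 t] fun s => deriv z s * p s := fun t ht =>
    eventually_of_mem (hU.mem_nhds ht) fun s hs => (hz' s hs).deriv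
  have hz0 : ∀ t ∈ U, deriv z t ≠ 0 := fun t ht => by
    rw [(hz t ht).deriv]
    exact div_ne_zero (hWr t ht) (pow_ne_zero 2 (hy₂ne t ht))
  refine ⟨fun t ht => (hz t ht).differentiableAt, fun t ht => (hz' t ht).differentiableAt,
    fun t ht => ((hz' t ht).differentiableAt.mul (hp t ht).differentiableAt).congr_of_eventuallyEq
      (hz'' t ht), hz0, fun t ht => ?_⟩
  rw [schwarzian_eq_of_deriv_deriv_eq_mul (hz' t ht).differentiableAt (hp t ht).differentiableAt
    (hz'' t ht) (hz0 t ht), (hp t ht).deriv]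
  ring
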